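/- The following are equivalent: (i) δ_k = 0 for all k = 1,…,r (equivalently min(l_k, d_k) = 1 for all k); (ii) there exist a degree vector m ∈ ℤ^r and distinct p_0, p_1 ∈ {0,…,n+1} such that for every p ∈ {0,…,n+1} with p ∉ {p_0, p_1} there exists k with p ∈ P_k(m), while for i = 0, 1, setting A_i = {k : m_k − p_i·d_k ≤ −l_k − 1}, the (p_i, A_i)-summand of m is nonzero and p_0 − Σ_{k∈A_0} l_k = 0 and p_1 − Σ_{k∈A_1} l_k = 1. (That is, a determinantal degree vector m exists whose Weyman complex is reduced to exactly one nonzero cohomology group on each of K_0(m) and K_1(m) if and only if all defects vanish.) -/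

import Mathlib

/-!
Each `P_k(m) ∩ ℤ` is an interval of at most `⌈l_k/d_k⌉ ≤ l_k` integers. If all but two of the
`n + 2` integers `0, …, n + 1` lie in these sets, then `n ≤ Σ_k ⌈l_k/d_k⌉`, which forces
`⌈l_k/d_k⌉ = l_k` for every `k`. Conversely, when all defects vanish, i.e. `(l_k - 1) d_k < l_k`,
the Sylvester vector `m_k = (1 + Σ_{π j ≥ π k} l_j) d_k − l_k` works with `p₀ = 0`, `p₁ = 1`:
`P_k(m)` contains the block `(1 + Σ_{π j > π k} l_j, 1 + Σ_{π j ≥ π k} l_j]`, and these blocks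
tile `{2, …, n + 1}`.
-/

open Finset

/-- `n = l₁ + ⋯ + l_r`, as an integer. -/
def nDim {r : ℕ} (l : Fin r → ℕ) : ℤ := ∑ k, (l k : ℤ)

/-- The defect vector: `δ_k = l_k − ⌈l_k / d_k⌉`. -/
def defect {r : ℕ} (l d : Fin r → ℕ) (k : Fin r) : ℤ :=
  (l k : ℤ) - ⌈(l k : ℚ) / (d k : ℚ)⌉

/-- `P_k(m) = {p ∈ ℤ : m_k/d_k < p ≤ (m_k + l_k)/d_k}`. -/
def Pset {r : ℕ} (l d : Fin r → ℕ) (m : Fin r → ℤ) (k : Fin r) : Set ℤ :=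
  {p : ℤ | (m k : ℚ) / (d k : ℚ) < (p : ℚ) ∧
    (p : ℚ) ≤ ((m k : ℚ) + (l k : ℚ)) / (d k : ℚ)}

/-- The `(p,J)`-summand of `m` is nonzero: `m_k − p d_k ≤ −l_k − 1` for `k ∈ J`
and `m_k − p d_k ≥ 0` for `k ∉ J`. -/
def SummandNonzero {r : ℕ} (l d : Fin r → ℕ) (m : Fin r → ℤ) (p : ℤ)
    (J : Finset (Fin r)) : Prop :=
  (∀ k ∈ J, m k - p * d k ≤ -(l k : ℤ) - 1) ∧ ∀ k ∉ J, 0 ≤ m k - p * d k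

/-- `K_ν(m) = 0`: every `(p,J)`-summand with `p ∈ {0,…,n+1}` and
`p − Σ_{k∈J} l_k = ν` is zero. -/
def Kvanish {r : ℕ} (l d : Fin r → ℕ) (m : Fin r → ℤ) (ν : ℤ) : Prop :=
  ∀ p : ℤ, 0 ≤ p → p ≤ nDim l + 1 →
    ∀ J : Finset (Fin r), p - ∑ k ∈ J, (l k : ℤ) = ν → ¬ SummandNonzero l d m p J

/-- `m` is determinantal iff `K_{-1}(m) = 0` and `K_2(m) = 0`. -/
def Determinantal {r : ℕ} (l d : Fin r → ℕ) (m : Fin r → ℤ) : Prop :=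
  Kvanish l d m (-1) ∧ Kvanish l d m 2

open scoped Classical in
/-- The dimension of the `(p,J)`-summand of `m`. -/
noncomputable def dimSummand {r : ℕ} (l d : Fin r → ℕ) (m : Fin r → ℤ) (p : ℤ)
    (J : Finset (Fin r)) : ℕ :=
  if SummandNonzero l d m p J then
    (∏ k ∈ J, (p * d k - m k - 1).toNat.choose (l k)) *
      ∏ k ∈ Jᶜ, (m k - p * d k + l k).toNat.choose (l k)
  else 0

open scoped Classical in
/-- `dim K_ν(m)`. -/
noncomputable def dimK {r : ℕ} (l d : Fin r → ℕ) (m : Fin r → ℤ) (ν : ℤ) : ℕ :=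
  ∑ p ∈ Finset.range ((∑ k, l k) + 2),
    ((∑ k, l k) + 1).choose p *
      ∑ J ∈ Finset.univ.filter
          (fun J : Finset (Fin r) => (p : ℤ) - ∑ k ∈ J, (l k : ℤ) = ν),
        dimSummand l d m (p : ℤ) J

/-- `m′`: agrees with `m` except `m′_k = m_k + d_k − [m_k]_k − 1`. -/
def mprime {r : ℕ} (d : Fin r → ℕ) (m : Fin r → ℤ) (k : Fin r) : Fin r → ℤ :=
  Function.update m k (m k + d k - m k % (d k : ℤ) - 1)

/-- `m″`: agrees with `m` except `m″_k = m_k − [m_k + l_k]_k`. -/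
def msecond {r : ℕ} (l d : Fin r → ℕ) (m : Fin r → ℤ) (k : Fin r) : Fin r → ℤ :=
  Function.update m k (m k - (m k + l k) % (d k : ℤ))

/-- The critical degree vector `ρ_k = (n+1) d_k − l_k − 1`. -/
def critical {r : ℕ} (l d : Fin r → ℕ) (k : Fin r) : ℤ :=
  (nDim l + 1) * d k - l k - 1

/-- `m` yields a pure Sylvester-type matrix. -/
def PureSylvester {r : ℕ} (l d : Fin r → ℕ) (m : Fin r → ℤ) : Prop :=
  (∀ k, 0 ≤ m k) ∧ (∀ k, (d k : ℤ) ≤ m k) ∧ Kvanish l d m (-1) ∧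
  ∀ ν : ℤ, (ν = 0 ∨ ν = 1) →
    ∀ p : ℤ, 0 ≤ p → p ≤ nDim l + 1 → ∀ J : Finset (Fin r), J ≠ ∅ →
      p - ∑ k ∈ J, (l k : ℤ) = ν → ¬ SummandNonzero l d m p J

/-- `m` yields a pure Bézout-type complex. -/
def PureBezout {r : ℕ} (l d : Fin r → ℕ) (m : Fin r → ℤ) : Prop :=
  Kvanish l d m (-1) ∧
  SummandNonzero l d m 0 ∅ ∧
  (∀ p : ℤ, 0 ≤ p → p ≤ nDim l + 1 → ∀ J : Finset (Fin r), J ≠ ∅ →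
      p - ∑ k ∈ J, (l k : ℤ) = 0 → ¬ SummandNonzero l d m p J) ∧
  SummandNonzero l d m (nDim l + 1) Finset.univ ∧
  (∀ p : ℤ, 0 ≤ p → p ≤ nDim l + 1 → ∀ J : Finset (Fin r),
      ¬(p = nDim l + 1 ∧ J = Finset.univ) →
      p - ∑ k ∈ J, (l k : ℤ) = 1 → ¬ SummandNonzero l d m p J)

/-- The Sylvester degree vector `m^π_k = (1 + Σ_{π(j) ≥ π(k)} l_j) d_k − l_k`. -/
def mSyl {r : ℕ} (l d : Fin r → ℕ) (π : Equiv.Perm (Fin r)) (k : Fin r) : ℤ :=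
  (1 + ∑ j ∈ Finset.univ.filter (fun j => π k ≤ π j), (l j : ℤ)) * d k - l k

/-- The Bézout degree vector `m^π_k = −l_k + d_k Σ_{π(j) ≥ π(k)} l_j`. -/
def mBez {r : ℕ} (l d : Fin r → ℕ) (π : Equiv.Perm (Fin r)) (k : Fin r) : ℤ :=
  -(l k : ℤ) + (d k : ℤ) * ∑ j ∈ Finset.univ.filter (fun j => π k ≤ π j), (l j : ℤ)

theorem Int.card_Ioc_floor_floor_add_le {α : Type*} [Ring α] [LinearOrder α]
    [IsStrictOrderedRing α] [FloorRing α] (x : α) {y : α} (hy : 0 ≤ y) :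
    ((Ioc ⌊x⌋ ⌊x + y⌋).card : ℤ) ≤ ⌈y⌉ := by
  have hfloor : ⌊x + y⌋ ≤ ⌊x⌋ + ⌈y⌉ := by
    rw [← Int.floor_add_intCast]
    exact Int.floor_mono (by gcongr; exact Int.le_ceil y)
  have := Int.ceil_nonneg hy
  rw [Int.card_Ioc]
  omega

theorem Nat.exists_lt_apply_succ_lt_le {β : Type*} [LinearOrder β] {f : ℕ → β} {q : β}
    {r : ℕ} (hr : f r < q) (h0 : q ≤ f 0) : ∃ i < r, f (i + 1) < q ∧ q ≤ f i := by
  classical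
  have hex : ∃ i, f i < q := ⟨r, hr⟩
  obtain ⟨i, hi⟩ : ∃ i, Nat.find hex = i + 1 :=
    Nat.exists_eq_add_one_of_ne_zero fun h => (h ▸ Nat.find_spec hex).not_ge h0
  refine ⟨i, ?_, hi ▸ Nat.find_spec hex, not_lt.1 (Nat.find_min hex (by omega))⟩
  have := Nat.find_min' hex hr
  omega

theorem ceil_natCast_div_le (l d : ℕ) : ⌈(l : ℚ) / d⌉ ≤ l := by
  rcases Nat.eq_zero_or_pos d with rfl | hd
  · simp
  · exact Int.ceil_le.2 (div_le_self (by positivity) (by exact_mod_cast hd))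

section

variable {r : ℕ} (l d : Fin r → ℕ)

theorem nDim_nonneg : 0 ≤ nDim l :=
  sum_nonneg fun _ _ => by positivity

theorem defect_nonneg (k : Fin r) : 0 ≤ defect l d k :=
  sub_nonneg.2 (ceil_natCast_div_le _ _)

theorem defect_eq_zero_of_nDim_le_sum_ceil (h : nDim l ≤ ∑ k, ⌈(l k : ℚ) / d k⌉)
    (k : Fin r) :
    defect l d k = 0 := by
  have hsum : ∑ k, defect l d k ≤ 0 := by
    simp only [defect, sum_sub_distrib, nDim] at h ⊢
    linarith
  exact (sum_eq_zero_iff_of_nonneg fun k _ => defect_nonneg l d k).1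
    (le_antisymm hsum (sum_nonneg fun k _ => defect_nonneg l d k)) k (mem_univ k)

variable {l d}

theorem sub_one_mul_lt_of_defect_eq_zero {k : Fin r} (hd : 0 < d k) (h : defect l d k = 0) :
    ((l k : ℤ) - 1) * d k < l k := by
  by_contra! hle
  have : (l k : ℚ) / d k ≤ ((l k - 1 : ℤ) : ℚ) := by
    rw [div_le_iff₀ (by exact_mod_cast hd)]
    exact_mod_cast hle
  have := Int.ceil_le.2 this
  unfold defect at h
  omega

variable {m : Fin r → ℤ}

theorem Pset_eq_Ioc (k : Fin r) :
    Pset l d m k = ↑(Ioc ⌊(m k : ℚ) / d k⌋ ⌊((m k : ℚ) + l k) / d k⌋) := by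
  ext p
  simp [Pset, Int.floor_lt, Int.le_floor]

theorem mem_Pset_iff {k : Fin r} (hd : 0 < d k) {p : ℤ} :
    p ∈ Pset l d m k ↔ m k < p * d k ∧ p * d k ≤ m k + l k := by
  have hd' : (0 : ℚ) < d k := by exact_mod_cast hd
  simp only [Pset, Set.mem_ofPred_eq, div_lt_iff₀ hd', le_div_iff₀ hd']
  norm_cast

theorem card_Pset_le (k : Fin r) :
    ((Ioc ⌊(m k : ℚ) / d k⌋ ⌊((m k : ℚ) + l k) / d k⌋).card : ℤ) ≤
      ⌈(l k : ℚ) / d k⌉ := by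
  rw [add_div]
  exact Int.card_Ioc_floor_floor_add_le _ (by positivity)

theorem nDim_le_sum_ceil_of_covers {p₀ p₁ : ℤ} (hne : p₀ ≠ p₁)
    (h₀ : p₀ ∈ Icc 0 (nDim l + 1)) (h₁ : p₁ ∈ Icc 0 (nDim l + 1))
    (hcov : ∀ p : ℤ, 0 ≤ p → p ≤ nDim l + 1 → p ≠ p₀ → p ≠ p₁ →
      ∃ k, p ∈ Pset l d m k) :
    nDim l ≤ ∑ k, ⌈(l k : ℚ) / d k⌉ := by
  set T := Icc 0 (nDim l + 1) \ {p₀, p₁}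
  have hT : (T.card : ℤ) = nDim l := by
    rw [card_sdiff_of_subset (insert_subset h₀ (singleton_subset_iff.2 h₁)), card_pair hne,
      Int.card_Icc]
    have := nDim_nonneg l
    omega
  have hsub :
      T ⊆ univ.biUnion fun k => Ioc ⌊(m k : ℚ) / d k⌋ ⌊((m k : ℚ) + l k) / d k⌋ := by
    intro p hp
    simp only [T, mem_sdiff, mem_Icc, mem_insert, mem_singleton, not_or] at hp
    obtain ⟨k, hk⟩ := hcov p hp.1.1 hp.1.2 hp.2.1 hp.2.2
    rw [Pset_eq_Ioc, mem_coe] at hk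
    exact mem_biUnion.2 ⟨k, mem_univ k, hk⟩
  calc nDim l = T.card := hT.symm
    _ ≤ ∑ k, ((Ioc ⌊(m k : ℚ) / d k⌋ ⌊((m k : ℚ) + l k) / d k⌋).card : ℤ) := by
      exact_mod_cast (card_le_card hsub).trans card_biUnion_le
    _ ≤ ∑ k, ⌈(l k : ℚ) / d k⌉ := sum_le_sum fun k _ => card_Pset_le k

theorem summandNonzero_empty_iff {p : ℤ} :
    SummandNonzero l d m p ∅ ↔ ∀ k, 0 ≤ m k - p * d k := by
  simp [SummandNonzero]

theorem filter_eq_empty_of_nonneg {p : ℤ} (h : ∀ k, 0 ≤ m k - p * d k) :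
    univ.filter (fun k => m k - p * d k ≤ -(l k : ℤ) - 1) = ∅ :=
  filter_false_of_mem fun k _ => by have := h k; omega

variable (l)

def tailSum (π : Equiv.Perm (Fin r)) (i : ℕ) : ℤ :=
  ∑ j ∈ univ.filter (fun j => i ≤ (π j : ℕ)), (l j : ℤ)

variable (π : Equiv.Perm (Fin r))

theorem tailSum_zero : tailSum l π 0 = nDim l := by
  simp [tailSum, nDim]

theorem tailSum_self : tailSum l π r = 0 :=
  sum_eq_zero fun j hj => absurd (mem_filter.1 hj).2 (not_le.2 (π j).isLt)

theorem tailSum_nonneg (i : ℕ) : 0 ≤ tailSum l π i :=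
  sum_nonneg fun _ _ => by positivity

theorem tailSum_apply (k : Fin r) : tailSum l π (π k) = l k + tailSum l π (π k + 1) := by
  have : univ.filter (fun j => (π k : ℕ) ≤ π j) =
      insert k (univ.filter fun j => (π k : ℕ) + 1 ≤ π j) := by
    ext j
    simp only [mem_filter, mem_univ, true_and, mem_insert]
    rw [← π.apply_eq_iff_eq, Fin.ext_iff]
    omega
  rw [tailSum, this, sum_insert (by simp)]
  rfl

theorem mSyl_eq (k : Fin r) : mSyl l d π k = (1 + tailSum l π (π k)) * d k - l k :=
  rfl

theorem mSyl_sub_mul_nonneg {k : Fin r} (hd : 0 < d k) {p : ℤ} (hp : p ≤ 1) :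
    0 ≤ mSyl l d π k - p * d k := by
  have hstep := tailSum_apply l π k
  have hrest := tailSum_nonneg l π (π k + 1)
  have hd1 : (1 : ℤ) ≤ d k := by exact_mod_cast hd
  rw [mSyl_eq]
  nlinarith

theorem exists_mem_Pset_mSyl (hd : ∀ k, 0 < d k) (hδ : ∀ k, defect l d k = 0) {p : ℤ}
    (hp : 2 ≤ p) (hpn : p ≤ nDim l + 1) : ∃ k, p ∈ Pset l d (mSyl l d π) k := by
  obtain ⟨i, hi, hlt, hle⟩ := Nat.exists_lt_apply_succ_lt_le (f := tailSum l π) (q := p - 1)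
    (by rw [tailSum_self]; omega) (by rw [tailSum_zero]; omega)
  set k := π.symm ⟨i, hi⟩
  have hk : (π k : ℕ) = i := by simp [k]
  have hstep := tailSum_apply l π k
  have hlk := sub_one_mul_lt_of_defect_eq_zero (hd k) (hδ k)
  have hd1 : (1 : ℤ) ≤ d k := by exact_mod_cast hd k
  rw [hk] at hstep
  refine ⟨k, (mem_Pset_iff (hd k)).2 ⟨?_, ?_⟩⟩ <;> rw [mSyl_eq, hk] <;> nlinarith

end

theorem two_terms_iff_defects_vanish_general (r : ℕ) (l d : Fin r → ℕ) (hd : ∀ k, 0 < d k) :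
    (∀ k, defect l d k = 0) ↔
      ∃ (m : Fin r → ℤ) (p₀ p₁ : ℤ), p₀ ≠ p₁ ∧
        0 ≤ p₀ ∧ p₀ ≤ nDim l + 1 ∧ 0 ≤ p₁ ∧ p₁ ≤ nDim l + 1 ∧
        (∀ p : ℤ, 0 ≤ p → p ≤ nDim l + 1 → p ≠ p₀ → p ≠ p₁ →
          ∃ k, p ∈ Pset l d m k) ∧
        SummandNonzero l d m p₀
          (Finset.univ.filter fun k => m k - p₀ * d k ≤ -(l k : ℤ) - 1) ∧
        SummandNonzero l d m p₁
          (Finset.univ.filter fun k => m k - p₁ * d k ≤ -(l k : ℤ) - 1) ∧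
        p₀ - ∑ k ∈ (Finset.univ.filter fun k => m k - p₀ * d k ≤ -(l k : ℤ) - 1),
          (l k : ℤ) = 0 ∧
        p₁ - ∑ k ∈ (Finset.univ.filter fun k => m k - p₁ * d k ≤ -(l k : ℤ) - 1),
          (l k : ℤ) = 1 := by
  constructor
  · intro hδ
    have hm : ∀ p ≤ (1 : ℤ), ∀ k, 0 ≤ mSyl l d (Equiv.refl _) k - p * d k :=
      fun p hp k => mSyl_sub_mul_nonneg l _ (hd k) hp
    have hn := nDim_nonneg l
    refine ⟨mSyl l d (Equiv.refl _), 0, 1, zero_ne_one, le_rfl, by omega, zero_le_one, by omega,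
      fun p _ hpn h0 h1 => exists_mem_Pset_mSyl l _ hd hδ (by omega) hpn, ?_⟩
    rw [filter_eq_empty_of_nonneg (hm 0 zero_le_one), filter_eq_empty_of_nonneg (hm 1 le_rfl),
      summandNonzero_empty_iff, summandNonzero_empty_iff]
    exact ⟨hm 0 zero_le_one, hm 1 le_rfl, by simp, by simp⟩
  · rintro ⟨m, p₀, p₁, hne, hp₀, hp₀n, hp₁, hp₁n, hcov, -⟩
    exact defect_eq_zero_of_nDim_le_sum_ceil l d <|
      nDim_le_sum_ceil_of_covers hne (mem_Icc.2 ⟨hp₀, hp₀n⟩) (mem_Icc.2 ⟨hp₁, hp₁n⟩) hcov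

/-- All defects vanish iff there exists a determinantal degree vector `m` whose Weyman
complex is reduced to exactly one nonzero cohomology group on each of `K_0(m)` and
`K_1(m)`. -/
theorem two_terms_iff_defects_vanish (r : ℕ) (hr : 0 < r) (l d : Fin r → ℕ) (hl : ∀ k, 0 < l k) (hd : ∀ k, 0 < d k) :
    (∀ k, defect l d k = 0) ↔
      ∃ (m : Fin r → ℤ) (p₀ p₁ : ℤ), p₀ ≠ p₁ ∧
        0 ≤ p₀ ∧ p₀ ≤ nDim l + 1 ∧ 0 ≤ p₁ ∧ p₁ ≤ nDim l + 1 ∧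
        (∀ p : ℤ, 0 ≤ p → p ≤ nDim l + 1 → p ≠ p₀ → p ≠ p₁ →
          ∃ k, p ∈ Pset l d m k) ∧
        SummandNonzero l d m p₀
          (Finset.univ.filter fun k => m k - p₀ * d k ≤ -(l k : ℤ) - 1) ∧
        SummandNonzero l d m p₁
          (Finset.univ.filter fun k => m k - p₁ * d k ≤ -(l k : ℤ) - 1) ∧
        p₀ - ∑ k ∈ (Finset.univ.filter fun k => m k - p₀ * d k ≤ -(l k : ℤ) - 1),
          (l k : ℤ) = 0 ∧
        p₁ - ∑ k ∈ (Finset.univ.filter fun k => m k - p₁ * d k ≤ -(l k : ℤ) - 1),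
          (l k : ℤ) = 1 :=
  two_terms_iff_defects_vanish_general r l d hd
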